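/- arXiv:1610.08938 — 3 statements merged into one kernel-verified Lean document; each statement's English description precedes it below -/
import Mathlib

section
/- Suppose in addition that the images are separated: d := min_{j≠k} dist(G_j(closure(D)×closure(B)), G_k(closure(D)×closure(B))) > 0. Then for any two finite words (ω_0,…,ω_p) ≠ (ω'_0,…,ω'_p) of the same length and any λ ∈ D, z, z' ∈ B, one has ‖G_{ω_0…ω_p}(λ,z) − G_{ω'_0…ω'_p}(λ,z')‖ ≥ e^{-pA} d. -/
open Metric Set Real

section Aux

variable {k m : ℕ}
    (c : EuclideanSpace ℂ (Fin k)) (R : ℝ)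
    (G : Fin m → ℂ × EuclideanSpace ℂ (Fin k) → ℂ × EuclideanSpace ℂ (Fin k))
    (ω : ℕ → Fin m)
    (comp : ℕ → ℂ × EuclideanSpace ℂ (Fin k) → ℂ × EuclideanSpace ℂ (Fin k))

lemma aux_pair (hfiber : ∀ j (lam : ℂ) z, (G j (lam, z)).1 = lam)
    (j : Fin m) (lam : ℂ) (z : EuclideanSpace ℂ (Fin k)) :
    G j (lam, z) = (lam, (G j (lam, z)).2) :=
  Prod.ext_iff.mpr ⟨hfiber j lam z, rfl⟩

lemma aux_norm_eq {E : Type*} [NormedAddCommGroup E] (lam : ℂ) (v v' : E) :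
    ‖((lam, v) : ℂ × E) - (lam, v')‖ = ‖v - v'‖ := by
  have h : ((lam, v) : ℂ × E) - (lam, v') = (0, v - v') := by
    simp [Prod.ext_iff]
  rw [h, Prod.norm_def]
  simp [norm_nonneg]

lemma aux_maps
    (hmaps : ∀ j, G j '' (closure (ball (0:ℂ) 1) ×ˢ closure (ball c R)) ⊆
      closure (ball (0:ℂ) 1) ×ˢ ball c R)
    (hcomp0 : comp 0 = G (ω 0))
    (hcompS : ∀ p, comp (p + 1) = comp p ∘ G (ω (p + 1))) :
    ∀ p, ∀ x ∈ closure (ball (0:ℂ) 1) ×ˢ closure (ball c R),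
      comp p x ∈ closure (ball (0:ℂ) 1) ×ˢ ball c R := by
  intro p
  induction p with
  | zero => intro x hx; rw [hcomp0]; exact hmaps _ ⟨x, hx, rfl⟩
  | succ q ih =>
      intro x hx
      rw [hcompS]
      have h1 : G (ω (q + 1)) x ∈ closure (ball (0:ℂ) 1) ×ˢ ball c R :=
        hmaps _ ⟨x, hx, rfl⟩
      exact ih _ ⟨h1.1, subset_closure h1.2⟩

lemma aux_fst
    (hfiber : ∀ j (lam : ℂ) z, (G j (lam, z)).1 = lam)
    (hcomp0 : comp 0 = G (ω 0))
    (hcompS : ∀ p, comp (p + 1) = comp p ∘ G (ω (p + 1))) :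
    ∀ p (lam : ℂ) z, (comp p (lam, z)).1 = lam := by
  intro p
  induction p with
  | zero => intro lam z; rw [hcomp0]; exact hfiber _ _ _
  | succ q ih =>
      intro lam z
      rw [hcompS]
      have hp := aux_pair G hfiber (ω (q + 1)) lam z
      simp only [Function.comp_apply]
      rw [hp]
      exact ih lam _

end Aux

/-- separation of slices of tubes indexed by distinct words of the
same length. -/
theorem stmt_3 {k m : ℕ}
    (a A : ℝ) (ha : 0 < a) (haA : a ≤ A)
    (c : EuclideanSpace ℂ (Fin k)) (R : ℝ) (hR : 0 < R)
    (G : Fin m → ℂ × EuclideanSpace ℂ (Fin k) → ℂ × EuclideanSpace ℂ (Fin k))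
    (hfiber : ∀ j (lam : ℂ) z, (G j (lam, z)).1 = lam)
    (hmaps : ∀ j, G j '' (closure (ball (0:ℂ) 1) ×ˢ closure (ball c R)) ⊆
      closure (ball (0:ℂ) 1) ×ˢ ball c R)
    (hcontr : ∀ j, ∀ lam ∈ closure (ball (0:ℂ) 1), ∀ z ∈ closure (ball c R),
      ∀ z' ∈ closure (ball c R),
      exp (-A) * ‖z - z'‖ ≤ ‖(G j (lam, z)).2 - (G j (lam, z')).2‖ ∧
      ‖(G j (lam, z)).2 - (G j (lam, z')).2‖ ≤ exp (-a) * ‖z - z'‖)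
    (d : ℝ) (hd : 0 < d)
    (hsep : ∀ j j', j ≠ j' →
      ∀ x ∈ G j '' (closure (ball (0:ℂ) 1) ×ˢ closure (ball c R)),
      ∀ y ∈ G j' '' (closure (ball (0:ℂ) 1) ×ˢ closure (ball c R)), d ≤ dist x y)
    (ω ω' : ℕ → Fin m)
    (comp comp' : ℕ → ℂ × EuclideanSpace ℂ (Fin k) → ℂ × EuclideanSpace ℂ (Fin k))
    (hcomp0 : comp 0 = G (ω 0))
    (hcompS : ∀ p, comp (p + 1) = comp p ∘ G (ω (p + 1)))
    (hcomp0' : comp' 0 = G (ω' 0))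
    (hcompS' : ∀ p, comp' (p + 1) = comp' p ∘ G (ω' (p + 1)))
    (p : ℕ) (hne : ∃ i ≤ p, ω i ≠ ω' i) :
    ∀ lam ∈ ball (0:ℂ) 1, ∀ z ∈ ball c R, ∀ z' ∈ ball c R,
      exp (-(p : ℝ) * A) * d ≤ ‖comp p (lam, z) - comp' p (lam, z')‖ := by
  have hA : 0 < A := lt_of_lt_of_le ha haA
  -- lower Lipschitz bound for comp on fibers
  have hlow : ∀ q : ℕ, ∀ lam ∈ closure (ball (0:ℂ) 1), ∀ z ∈ closure (ball c R),
      ∀ z' ∈ closure (ball c R),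
      exp (-((q : ℝ) + 1) * A) * ‖z - z'‖ ≤ ‖(comp q (lam, z)).2 - (comp q (lam, z')).2‖ := by
    intro q
    induction q with
    | zero =>
        intro lam hlam z hz z' hz'
        rw [hcomp0]
        simpa using (hcontr (ω 0) lam hlam z hz z' hz').1
    | succ q ih =>
        intro lam hlam z hz z' hz'
        rw [hcompS]
        set v := (G (ω (q + 1)) (lam, z)).2 with hv
        set v' := (G (ω (q + 1)) (lam, z')).2 with hv'
        have hGv : G (ω (q + 1)) (lam, z) = (lam, v) := aux_pair G hfiber _ _ _
        have hGv' : G (ω (q + 1)) (lam, z') = (lam, v') := aux_pair G hfiber _ _ _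
        have hvmem : v ∈ closure (ball c R) :=
          subset_closure (hmaps (ω (q + 1)) ⟨(lam, z), ⟨hlam, hz⟩, rfl⟩).2
        have hvmem' : v' ∈ closure (ball c R) :=
          subset_closure (hmaps (ω (q + 1)) ⟨(lam, z'), ⟨hlam, hz'⟩, rfl⟩).2
        have h1 := ih lam hlam v hvmem v' hvmem'
        have h2 := (hcontr (ω (q + 1)) lam hlam z hz z' hz').1
        simp only [Function.comp_apply, hGv, hGv']
        push_cast
        calc exp (-((q : ℝ) + 1 + 1) * A) * ‖z - z'‖
            = exp (-((q : ℝ) + 1) * A) * (exp (-A) * ‖z - z'‖) := by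
              rw [← mul_assoc, ← Real.exp_add]; push_cast; ring_nf
          _ ≤ exp (-((q : ℝ) + 1) * A) * ‖v - v'‖ :=
              mul_le_mul_of_nonneg_left h2 (exp_nonneg _)
          _ ≤ _ := h1
  -- comp agrees with comp' when the letters agree
  have heq : ∀ q, (∀ i ≤ q, ω i = ω' i) → comp q = comp' q := by
    intro q
    induction q with
    | zero => intro h; rw [hcomp0, hcomp0', h 0 le_rfl]
    | succ q ih =>
        intro h
        rw [hcompS, hcompS', ih (fun i hi => h i (hi.trans (Nat.le_succ q))),
          h (q + 1) le_rfl]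
  have hfst := aux_fst G ω comp hfiber hcomp0 hcompS
  -- main induction
  have main : ∀ q : ℕ, (∃ i ≤ q, ω i ≠ ω' i) →
      ∀ lam ∈ ball (0:ℂ) 1, ∀ z ∈ ball c R, ∀ z' ∈ ball c R,
      exp (-(q : ℝ) * A) * d ≤ ‖comp q (lam, z) - comp' q (lam, z')‖ := by
    intro q
    induction q with
    | zero =>
        rintro ⟨i, hi, hnei⟩ lam hlam z hz z' hz'
        interval_cases i
        have h := hsep (ω 0) (ω' 0) hnei (G (ω 0) (lam, z))
          ⟨(lam, z), ⟨subset_closure hlam, subset_closure hz⟩, rfl⟩ (G (ω' 0) (lam, z'))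
          ⟨(lam, z'), ⟨subset_closure hlam, subset_closure hz'⟩, rfl⟩
        rw [hcomp0, hcomp0']
        simpa [dist_eq_norm] using h
    | succ q ih =>
        rintro ⟨i, hi, hnei⟩ lam hlam z hz z' hz'
        rw [hcompS, hcompS']
        set v := (G (ω (q + 1)) (lam, z)).2 with hv
        set v' := (G (ω' (q + 1)) (lam, z')).2 with hv'
        have hGv : G (ω (q + 1)) (lam, z) = (lam, v) := aux_pair G hfiber _ _ _
        have hGv' : G (ω' (q + 1)) (lam, z') = (lam, v') := aux_pair G hfiber _ _ _
        have hvmem : v ∈ ball c R :=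
          (hmaps (ω (q + 1)) ⟨(lam, z), ⟨subset_closure hlam, subset_closure hz⟩, rfl⟩).2
        have hvmem' : v' ∈ ball c R :=
          (hmaps (ω' (q + 1)) ⟨(lam, z'), ⟨subset_closure hlam, subset_closure hz'⟩, rfl⟩).2
        simp only [Function.comp_apply, hGv, hGv']
        by_cases hcase : ∃ i ≤ q, ω i ≠ ω' i
        · have h1 := ih hcase lam hlam v hvmem v' hvmem'
          push_cast
          calc exp (-((q : ℝ) + 1) * A) * d ≤ exp (-(q : ℝ) * A) * d := by
                apply mul_le_mul_of_nonneg_right _ hd.le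
                apply exp_le_exp.mpr
                push_cast
                nlinarith [hA]
            _ ≤ _ := h1
        · push_neg at hcase
          have hlast : ω (q + 1) ≠ ω' (q + 1) := by
            rcases Nat.lt_succ_iff_lt_or_eq.mp (Nat.lt_succ_of_le hi) with h | h
            · exact absurd (hcase i (Nat.lt_succ_iff.mp h)) hnei
            · rwa [h] at hnei
          rw [← heq q hcase]
          have hdvv : d ≤ ‖v - v'‖ := by
            have h := hsep (ω (q + 1)) (ω' (q + 1)) hlast (G (ω (q + 1)) (lam, z))
              ⟨(lam, z), ⟨subset_closure hlam, subset_closure hz⟩, rfl⟩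
              (G (ω' (q + 1)) (lam, z'))
              ⟨(lam, z'), ⟨subset_closure hlam, subset_closure hz'⟩, rfl⟩
            rwa [hGv, hGv', dist_eq_norm, aux_norm_eq] at h
          have h1 := hlow q lam (subset_closure hlam) v (subset_closure hvmem)
            v' (subset_closure hvmem')
          have hpv : comp q (lam, v) = (lam, (comp q (lam, v)).2) :=
            Prod.ext_iff.mpr ⟨hfst q lam v, rfl⟩
          have hpv' : comp q (lam, v') = (lam, (comp q (lam, v')).2) :=
            Prod.ext_iff.mpr ⟨hfst q lam v', rfl⟩
          have hnormeq : ‖comp q (lam, v) - comp q (lam, v')‖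
              = ‖(comp q (lam, v)).2 - (comp q (lam, v')).2‖ := by
            conv_lhs => rw [hpv, hpv']
            exact aux_norm_eq lam _ _
          rw [hnormeq]
          push_cast
          calc exp (-((q : ℝ) + 1) * A) * d
              ≤ exp (-((q : ℝ) + 1) * A) * ‖v - v'‖ := by
                apply mul_le_mul_of_nonneg_left hdvv (exp_nonneg _)
                  |>.trans_eq' (by push_cast; ring_nf)
            _ ≤ _ := h1
  exact main p hne
end

section
/- Under the hypotheses of Section 1 (fiber-preserving holomorphic contractions G_1,…,G_m with separation constant d > 0 and fiberwise Lipschitz bounds between e^{-A} and e^{-a}): for every 0 < r < 1 there exists a constant C_r > 0 such that for any two distinct finite words (ω_0,…,ω_p) ≠ (ω'_0,…,ω'_p) of length p+1 and all (λ,z), (λ',z') ∈ D_r × B, ‖G_{ω_0…ω_p}(λ,z) − G_{ω'_0…ω'_p}(λ',z')‖ ≥ C_r e^{-pA}, where D_r is the disc of radius r. One may take C_r = d/(2K_r) where K_r is a uniform Lipschitz constant in λ on D_r obtained from Cauchy estimates. -/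
/-!
On a common fibre `λ = λ'`, distinct words are separated by induction on their length: if the
leading letters differ, the images of the two leading maps are `d` apart; otherwise the separation
of the shorter words shrinks by at most the factor `e^{-A}`, the lower fibrewise Lipschitz bound.
For different parameters, `λ ↦ G_ω(λ, z)` is holomorphic on the unit disc with values in a fixed
bounded set, so by the Schwarz lemma it is `K_r`-Lipschitz on `D_r` uniformly in the word.
Since `|λ - λ'|` is a coordinate of the distance, and moving `λ'` to `λ` costs at most
`K_r |λ - λ'|`, the distance is at least `d e^{-pA} / (1 + K_r)`.
-/

open Metric Set Real

section WordComp

variable {ι X : Type*}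

/-- `wordComp G ω p = G (ω 0) ∘ G (ω 1) ∘ ⋯ ∘ G (ω p)`. -/
def wordComp (G : ι → X → X) (ω : ℕ → ι) : ℕ → X → X
  | 0 => G (ω 0)
  | p + 1 => wordComp G ω p ∘ G (ω (p + 1))

variable (G : ι → X → X)

theorem wordComp_succ' (ω : ℕ → ι) (p : ℕ) :
    wordComp G ω (p + 1) = G (ω 0) ∘ wordComp G (fun n => ω (n + 1)) p := by
  induction p with
  | zero => rfl
  | succ q ih => rw [wordComp, ih]; rfl

theorem eq_wordComp {ω : ℕ → ι} {comp : ℕ → X → X} (h0 : comp 0 = G (ω 0))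
    (hsucc : ∀ p, comp (p + 1) = comp p ∘ G (ω (p + 1))) (p : ℕ) : comp p = wordComp G ω p := by
  induction p with
  | zero => exact h0
  | succ q ih => rw [hsucc, ih, wordComp]

theorem mapsTo_wordComp {S T : Set X} (hG : ∀ j, MapsTo (G j) S T) (hTS : T ⊆ S)
    (ω : ℕ → ι) (p : ℕ) : MapsTo (wordComp G ω p) S T := by
  induction p with
  | zero => exact hG _
  | succ q ih => exact ih.comp ((hG _).mono_right hTS)

theorem wordComp_apply_fibre {β : Type*} {proj : X → β} (hG : ∀ j x, proj (G j x) = proj x)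
    (ω : ℕ → ι) (p : ℕ) (x : X) : proj (wordComp G ω p x) = proj x := by
  induction p generalizing x with
  | zero => exact hG _ x
  | succ q ih => exact (ih _).trans (hG _ x)

theorem differentiableAt_wordComp {𝕜 : Type*} [NontriviallyNormedField 𝕜]
    [NormedAddCommGroup X] [NormedSpace 𝕜 X] {S : Set X}
    (hdiff : ∀ j, ∀ x ∈ S, DifferentiableAt 𝕜 (G j) x) (hmaps : ∀ j, MapsTo (G j) S S)
    (ω : ℕ → ι) (p : ℕ) : ∀ x ∈ S, DifferentiableAt 𝕜 (wordComp G ω p) x := by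
  induction p with
  | zero => exact hdiff _
  | succ q ih => exact fun x hx => (ih _ (hmaps _ hx)).comp x (hdiff _ x hx)

theorem le_dist_wordComp_of_ne [PseudoMetricSpace X] {β : Type*} {proj : X → β} {S : Set X}
    {κ d : ℝ} (hκ₀ : 0 ≤ κ) (hκ₁ : κ ≤ 1) (hd : 0 ≤ d)
    (hfibre : ∀ j x, proj (G j x) = proj x) (hmaps : ∀ j, MapsTo (G j) S S)
    (hexpand : ∀ j, ∀ x ∈ S, ∀ y ∈ S, proj x = proj y → κ * dist x y ≤ dist (G j x) (G j y))
    (hsep : ∀ j j', j ≠ j' → ∀ x ∈ S, ∀ y ∈ S, d ≤ dist (G j x) (G j' y))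
    (p : ℕ) (ω ω' : ℕ → ι) (hne : ∃ i ≤ p, ω i ≠ ω' i)
    (x y : X) (hx : x ∈ S) (hy : y ∈ S) (hxy : proj x = proj y) :
    d * κ ^ p ≤ dist (wordComp G ω p x) (wordComp G ω' p y) := by
  induction p generalizing ω ω' with
  | zero =>
    obtain ⟨i, hi, hne⟩ := hne
    obtain rfl : i = 0 := Nat.le_zero.mp hi
    simpa [wordComp] using hsep _ _ hne x hx y hy
  | succ q ih =>
    rw [wordComp_succ', wordComp_succ', Function.comp_apply, Function.comp_apply]
    set u := wordComp G (fun n => ω (n + 1)) q x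
    set u' := wordComp G (fun n => ω' (n + 1)) q y
    have hu : u ∈ S := mapsTo_wordComp G hmaps subset_rfl _ q hx
    have hu' : u' ∈ S := mapsTo_wordComp G hmaps subset_rfl _ q hy
    by_cases h0 : ω 0 = ω' 0
    · obtain ⟨i, hi, hne⟩ := hne
      obtain ⟨i, rfl⟩ : ∃ i', i = i' + 1 := Nat.exists_eq_add_one.mpr
        (Nat.pos_of_ne_zero (by rintro rfl; exact hne h0))
      have hsame : proj u = proj u' := by
        rw [wordComp_apply_fibre G hfibre, wordComp_apply_fibre G hfibre, hxy]
      calc d * κ ^ (q + 1) = κ * (d * κ ^ q) := by ring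
        _ ≤ κ * dist u u' := by
            gcongr; exact ih _ _ ⟨i, by omega, hne⟩
        _ ≤ dist (G (ω 0) u) (G (ω' 0) u') := h0 ▸ hexpand _ u hu u' hu' hsame
    · calc d * κ ^ (q + 1) ≤ d := mul_le_of_le_one_right hd (pow_le_one₀ hκ₀ hκ₁)
        _ ≤ _ := hsep _ _ h0 u hu u' hu'

end WordComp

theorem Complex.dist_le_mul_dist_of_norm_le {E : Type*} [NormedAddCommGroup E] [NormedSpace ℂ E]
    {f : ℂ → E} {c : ℂ} {ρ r M : ℝ} (hr : r < ρ) (hf : DifferentiableOn ℂ f (ball c ρ))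
    (hM : ∀ w ∈ ball c ρ, ‖f w‖ ≤ M) {z w : ℂ} (hz : z ∈ ball c r) (hw : w ∈ ball c r) :
    dist (f z) (f w) ≤ 2 * M / (ρ - r) * dist z w := by
  have hsub : ∀ z₀ ∈ ball c r, ball z₀ (ρ - r) ⊆ ball c ρ := fun z₀ hz₀ =>
    ball_subset_ball' (by linarith [mem_ball.mp hz₀])
  have hderiv : ∀ z₀ ∈ ball c r, ‖deriv f z₀‖ ≤ 2 * M / (ρ - r) := by
    intro z₀ hz₀
    refine Complex.norm_deriv_le_div_of_mapsTo_ball (hf.mono (hsub z₀ hz₀)) ?_ (by linarith)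
    intro w hw
    rw [mem_closedBall, dist_eq_norm]
    have hz₀ρ : z₀ ∈ ball c ρ := ball_subset_ball hr.le hz₀
    linarith [norm_sub_le (f w) (f z₀), hM w (hsub z₀ hz₀ hw), hM z₀ hz₀ρ]
  have hdiff : ∀ z₀ ∈ ball c r, DifferentiableAt ℂ f z₀ := fun z₀ hz₀ =>
    hf.differentiableAt (isOpen_ball.mem_nhds (ball_subset_ball hr.le hz₀))
  simpa only [dist_eq_norm] using
    (convex_ball c r).norm_image_sub_le_of_norm_deriv_le hdiff hderiv hw hz

theorem dist_wordComp_le {ι E : Type*} [NormedAddCommGroup E] [NormedSpace ℂ E]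
    (G : ι → ℂ × E → ℂ × E) {S T : Set (ℂ × E)} {c : ℂ} {ρ r M : ℝ} (hr : r < ρ)
    (hdiff : ∀ j, ∀ x ∈ S, DifferentiableAt ℂ (G j) x) (hGT : ∀ j, MapsTo (G j) S T)
    (hTS : T ⊆ S) (hM : ∀ x ∈ T, ‖x‖ ≤ M) {z : E} (hz : MapsTo (fun w => (w, z)) (ball c ρ) S)
    (ω : ℕ → ι) (p : ℕ) {w w' : ℂ} (hw : w ∈ ball c r) (hw' : w' ∈ ball c r) :
    dist (wordComp G ω p (w, z)) (wordComp G ω p (w', z)) ≤ 2 * M / (ρ - r) * dist w w' := by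
  have hGS : ∀ j, MapsTo (G j) S S := fun j => (hGT j).mono_right hTS
  refine Complex.dist_le_mul_dist_of_norm_le (f := fun w => wordComp G ω p (w, z)) hr
    (fun v hv => ?_) (fun v hv => hM _ (mapsTo_wordComp G hGT hTS ω p (hz hv))) hw hw'
  exact ((differentiableAt_wordComp G hdiff hGS ω p _ (hz hv)).comp v
    (differentiableAt_id.prodMk (differentiableAt_const z))).differentiableWithinAt

theorem div_one_add_le_dist {X : Type*} [PseudoMetricSpace X] {x y w : X} {t δ K : ℝ}
    (hK : 0 ≤ K) (ht : t ≤ dist x y) (hxw : δ ≤ dist x w) (hwy : dist w y ≤ K * t) :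
    δ / (1 + K) ≤ dist x y := by
  rw [div_le_iff₀ (by positivity)]
  have := dist_triangle_right x w y
  nlinarith [mul_le_mul_of_nonneg_left ht hK]

theorem stmt_4_general {k m : ℕ}
    (a A : ℝ) (ha : 0 < a) (haA : a ≤ A)
    (c : EuclideanSpace ℂ (Fin k)) (R : ℝ)
    (G : Fin m → ℂ × EuclideanSpace ℂ (Fin k) → ℂ × EuclideanSpace ℂ (Fin k))
    (hol : ∀ j, ∃ U : Set (ℂ × EuclideanSpace ℂ (Fin k)), IsOpen U ∧
      closure (ball (0:ℂ) 1) ×ˢ closure (ball c R) ⊆ U ∧ DifferentiableOn ℂ (G j) U)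
    (hfiber : ∀ j (lam : ℂ) z, (G j (lam, z)).1 = lam)
    (hmaps : ∀ j, G j '' (closure (ball (0:ℂ) 1) ×ˢ closure (ball c R)) ⊆
      closure (ball (0:ℂ) 1) ×ˢ ball c R)
    (hcontr : ∀ j, ∀ lam ∈ closure (ball (0:ℂ) 1), ∀ z ∈ closure (ball c R),
      ∀ z' ∈ closure (ball c R),
      exp (-A) * ‖z - z'‖ ≤ ‖(G j (lam, z)).2 - (G j (lam, z')).2‖ ∧
      ‖(G j (lam, z)).2 - (G j (lam, z')).2‖ ≤ exp (-a) * ‖z - z'‖)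
    (d : ℝ) (hd : 0 < d)
    (hsep : ∀ j j', j ≠ j' →
      ∀ x ∈ G j '' (closure (ball (0:ℂ) 1) ×ˢ closure (ball c R)),
      ∀ y ∈ G j' '' (closure (ball (0:ℂ) 1) ×ˢ closure (ball c R)), d ≤ dist x y) :
    ∀ r : ℝ, 0 < r → r < 1 → ∃ C > (0:ℝ),
      ∀ (ω ω' : ℕ → Fin m)
        (comp comp' : ℕ → ℂ × EuclideanSpace ℂ (Fin k) → ℂ × EuclideanSpace ℂ (Fin k)),
        comp 0 = G (ω 0) → (∀ p, comp (p + 1) = comp p ∘ G (ω (p + 1))) →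
        comp' 0 = G (ω' 0) → (∀ p, comp' (p + 1) = comp' p ∘ G (ω' (p + 1))) →
        ∀ p : ℕ, (∃ i ≤ p, ω i ≠ ω' i) →
        ∀ lam ∈ ball (0:ℂ) r, ∀ lam' ∈ ball (0:ℂ) r,
        ∀ z ∈ ball c R, ∀ z' ∈ ball c R,
        C * exp (-(p : ℝ) * A) ≤ ‖comp p (lam, z) - comp' p (lam', z')‖ := by
  intro r hr hr1
  set S := closure (ball (0:ℂ) 1) ×ˢ closure (ball c R)
  set T := closure (ball (0:ℂ) 1) ×ˢ ball c R
  have hGT : ∀ j, MapsTo (G j) S T := fun j => mapsTo_iff_image_subset.mpr (hmaps j)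
  have hTS : T ⊆ S := prod_mono subset_rfl subset_closure
  have hfibre : ∀ j x, (G j x).1 = x.1 := fun j x => hfiber j x.1 x.2
  have hdiff : ∀ j, ∀ x ∈ S, DifferentiableAt ℂ (G j) x := fun j x hx => by
    obtain ⟨U, hU, hSU, hGU⟩ := hol j
    exact hGU.differentiableAt (hU.mem_nhds (hSU hx))
  have hexpand : ∀ j, ∀ x ∈ S, ∀ y ∈ S, x.1 = y.1 →
      exp (-A) * dist x y ≤ dist (G j x) (G j y) := by
    rintro j ⟨lam, z⟩ ⟨hlam, hz⟩ ⟨lam', z'⟩ ⟨-, hz'⟩ (rfl : lam = lam')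
    have hGlam : ∀ w, G j (lam, w) = (lam, (G j (lam, w)).2) := fun w =>
      Prod.ext (hfiber j lam w) rfl
    rw [dist_prod_same_left, hGlam z, hGlam z', dist_prod_same_left, dist_eq_norm, dist_eq_norm]
    exact (hcontr j lam hlam z hz z' hz').1
  have hTb : Bornology.IsBounded T := isBounded_ball.closure.prod isBounded_ball
  obtain ⟨M, hM₀, hM⟩ := hTb.exists_pos_norm_le
  refine ⟨d / (1 + 2 * M / (1 - r)), by have := sub_pos.mpr hr1; positivity, ?_⟩
  intro ω ω' comp comp' h0 hsucc h0' hsucc' p hne lam hlam lam' hlam' z hz z' hz'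
  have hS : ∀ {w v}, w ∈ ball (0:ℂ) 1 → v ∈ ball c R → (w, v) ∈ S := fun hw hv =>
    ⟨subset_closure hw, subset_closure hv⟩
  have hlam₁ := ball_subset_ball hr1.le hlam
  rw [eq_wordComp G h0 hsucc, eq_wordComp G h0' hsucc', ← dist_eq_norm,
    show -(p : ℝ) * A = p * -A by ring, exp_nat_mul, div_mul_eq_mul_div]
  refine div_one_add_le_dist (by have := sub_pos.mpr hr1; positivity) ?_
    (le_dist_wordComp_of_ne G (exp_pos _).le (exp_le_one_iff.mpr (by linarith)) hd.le
      hfibre (fun j => (hGT j).mono_right hTS) hexpand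
      (fun j j' hjj' x hx y hy =>
        hsep j j' hjj' _ (mem_image_of_mem _ hx) _ (mem_image_of_mem _ hy))
      p ω ω' hne _ _ (hS hlam₁ hz) (hS hlam₁ hz') rfl)
    (dist_wordComp_le G hr1 hdiff hGT hTS hM (fun w hw => hS hw hz') ω' p hlam hlam')
  calc dist lam lam' = dist (wordComp G ω p (lam, z)).1 (wordComp G ω' p (lam', z')).1 := by
        rw [wordComp_apply_fibre G hfibre, wordComp_apply_fibre G hfibre]
    _ ≤ _ := le_max_left _ _

/-- uniform separation of tubes indexed by distinct words, with
varying parameters in a smaller disc D_r. -/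
theorem stmt_4 {k m : ℕ}
    (a A : ℝ) (ha : 0 < a) (haA : a ≤ A)
    (c : EuclideanSpace ℂ (Fin k)) (R : ℝ) (hR : 0 < R)
    (G : Fin m → ℂ × EuclideanSpace ℂ (Fin k) → ℂ × EuclideanSpace ℂ (Fin k))
    (hol : ∀ j, ∃ U : Set (ℂ × EuclideanSpace ℂ (Fin k)), IsOpen U ∧
      closure (ball (0:ℂ) 1) ×ˢ closure (ball c R) ⊆ U ∧ DifferentiableOn ℂ (G j) U)
    (hfiber : ∀ j (lam : ℂ) z, (G j (lam, z)).1 = lam)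
    (hmaps : ∀ j, G j '' (closure (ball (0:ℂ) 1) ×ˢ closure (ball c R)) ⊆
      closure (ball (0:ℂ) 1) ×ˢ ball c R)
    (hcontr : ∀ j, ∀ lam ∈ closure (ball (0:ℂ) 1), ∀ z ∈ closure (ball c R),
      ∀ z' ∈ closure (ball c R),
      exp (-A) * ‖z - z'‖ ≤ ‖(G j (lam, z)).2 - (G j (lam, z')).2‖ ∧
      ‖(G j (lam, z)).2 - (G j (lam, z')).2‖ ≤ exp (-a) * ‖z - z'‖)
    (d : ℝ) (hd : 0 < d)
    (hsep : ∀ j j', j ≠ j' →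
      ∀ x ∈ G j '' (closure (ball (0:ℂ) 1) ×ˢ closure (ball c R)),
      ∀ y ∈ G j' '' (closure (ball (0:ℂ) 1) ×ˢ closure (ball c R)), d ≤ dist x y) :
    ∀ r : ℝ, 0 < r → r < 1 → ∃ C > (0:ℝ),
      ∀ (ω ω' : ℕ → Fin m)
        (comp comp' : ℕ → ℂ × EuclideanSpace ℂ (Fin k) → ℂ × EuclideanSpace ℂ (Fin k)),
        comp 0 = G (ω 0) → (∀ p, comp (p + 1) = comp p ∘ G (ω (p + 1))) →
        comp' 0 = G (ω' 0) → (∀ p, comp' (p + 1) = comp' p ∘ G (ω' (p + 1))) →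
        ∀ p : ℕ, (∃ i ≤ p, ω i ≠ ω' i) →
        ∀ lam ∈ ball (0:ℂ) r, ∀ lam' ∈ ball (0:ℂ) r,
        ∀ z ∈ ball c R, ∀ z' ∈ ball c R,
        C * exp (-(p : ℝ) * A) ≤ ‖comp p (lam, z) - comp' p (lam', z')‖ :=
  stmt_4_general a A ha haA c R G hol hfiber hmaps hcontr d hd hsep
end

section
/- Under the hypotheses of Section 1, for every λ_0 ∈ D and every 0 < r < 1, the holonomy map H_{λ_0} : 𝒢 → (𝒢)_{λ_0}, defined by H_{λ_0}(λ, ω(λ)) = (λ_0, ω(λ_0)), is well defined and (a/A)-Hölder continuous on 𝒢 ∩ (D_r × B): there is a constant C' > 0 with ‖ω(λ_0) − ω'(λ_0)‖ ≤ C' ‖(λ, ω(λ)) − (λ', ω'(λ'))‖^{a/A} for all ω, ω' ∈ {1,…,m}^ℕ and λ, λ' ∈ D_r. -/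
/-!
The fibres of `G_{ω₀…ω_p}(D × B)` have diameter at most `e^{-ap} diam B`, so `Γ_ω` is a graph and
`H_{λ₀}` is well defined. If `ω` and `ω'` first differ at index `p`, the two points over `λ₀` lie
in one fibre of `G_{ω₀…ω_{p-1}}(D × B)`, hence are `e^{-ap} diam B`-close. The two points over
`λ, λ'` are images under `G_{ω₀…ω_{p-1}}` of points of the `d`-separated sets `G_{ω_p}(D × B)`
and `G_{ω'_p}(D × B)`; since this map expands fibres by at least `e^{-Ap}` and, by the Cauchy
estimate, is `diam B / (1 - r)`-Lipschitz in `λ ∈ D_r`, they stay `≳ e^{-Ap}` apart.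
As `e^{-ap} = (e^{-Ap})^{a/A}`, the two bounds combine to the Hölder estimate.
-/

open Metric Set Real

theorem exp_neg_pow_le_rpow {a A C δ : ℝ} (ha : 0 ≤ a) (hA : 0 < A) (hC : 0 < C) {p : ℕ}
    (h : exp (-A) ^ p * C ≤ δ) : exp (-a) ^ p ≤ (δ / C) ^ (a / A) := by
  have hpow : exp (-a) ^ p = (exp (-A) ^ p) ^ (a / A) := by
    rw [← exp_nat_mul, ← exp_nat_mul, ← exp_mul]
    congr 1
    field_simp
  rw [hpow]
  exact rpow_le_rpow (by positivity) ((le_div_iff₀ hC).2 h) (div_nonneg ha hA.le)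

theorem le_norm_map_sub_map {β E : Type*} [SeminormedAddCommGroup β] [SeminormedAddCommGroup E]
    {Φ : β × E → β × E} (hfst : ∀ x, (Φ x).1 = x.1) {x y : β × E} {μ L d : ℝ}
    (hμ0 : 0 ≤ μ) (hμ1 : μ ≤ 1) (hL : 0 ≤ L)
    (hexp : μ * ‖x.2 - y.2‖ ≤ ‖(Φ x).2 - (Φ (x.1, y.2)).2‖)
    (hlip : ‖(Φ (x.1, y.2)).2 - (Φ y).2‖ ≤ L * ‖x.1 - y.1‖) (hsep : d ≤ ‖x - y‖) :
    μ * (d / (L + 1)) ≤ ‖Φ x - Φ y‖ := by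
  rw [Prod.norm_def] at hsep ⊢
  simp only [Prod.fst_sub, Prod.snd_sub, hfst] at hsep ⊢
  set ε := μ * (d / (L + 1))
  rcases le_or_gt ε ‖x.1 - y.1‖ with hbase | hbase
  · exact hbase.trans (le_max_left _ _)
  have hε : ε * (L + 1) = μ * d := by simp only [ε]; field_simp
  have hd : 0 < d := (div_pos_iff_of_pos_right (by linarith)).1
    (pos_of_mul_pos_right ((norm_nonneg _).trans_lt hbase) hμ0)
  have hεd : ε ≤ d := by nlinarith
  have hfib : d ≤ ‖x.2 - y.2‖ := by
    rcases le_max_iff.1 hsep with h | h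
    · linarith
    · exact h
  have htri := norm_sub_le_norm_sub_add_norm_sub (Φ x).2 (Φ y).2 (Φ (x.1, y.2)).2
  rw [norm_sub_rev (Φ y).2] at htri
  refine le_max_of_le_right ?_
  nlinarith [mul_le_mul_of_nonneg_left hfib hμ0, mul_le_mul_of_nonneg_left hbase.le hL]

theorem norm_sub_le_of_mem_closure_ball {E : Type*} [SeminormedAddCommGroup E] {c z z' : E}
    {R : ℝ} (hz : z ∈ closure (ball c R)) (hz' : z' ∈ closure (ball c R)) : ‖z - z'‖ ≤ 2 * R := by
  rw [← dist_eq_norm]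
  linarith [dist_triangle_right z z' c, mem_closedBall.1 (closure_ball_subset_closedBall hz),
    mem_closedBall.1 (closure_ball_subset_closedBall hz')]

theorem Complex.norm_sub_le_of_mapsTo_closedBall {E : Type*} [NormedAddCommGroup E]
    [NormedSpace ℂ E] {f : ℂ → E} {c : E} {R r : ℝ} (hf : DifferentiableOn ℂ f (ball 0 1))
    (hmaps : MapsTo f (ball 0 1) (closedBall c R)) (hr : r < 1) {z z' : ℂ}
    (hz : z ∈ ball (0 : ℂ) r) (hz' : z' ∈ ball (0 : ℂ) r) :
    ‖f z - f z'‖ ≤ 2 * R / (1 - r) * ‖z - z'‖ := by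
  have hderiv : ∀ μ ∈ ball (0 : ℂ) r, ‖deriv f μ‖ ≤ 2 * R / (1 - r) := by
    intro μ hμ
    have hsub : ball μ (1 - r) ⊆ ball 0 1 :=
      ball_subset_ball' (by linarith [mem_ball.1 hμ])
    refine Complex.norm_deriv_le_div_of_mapsTo_ball (hf.mono hsub) (fun w hw => ?_) (by linarith)
    have hw := mem_closedBall.1 (hmaps (hsub hw))
    have hμc := mem_closedBall.1 (hmaps (hsub (mem_ball_self (by linarith))))
    exact mem_closedBall.2 (by linarith [dist_triangle_right (f w) (f μ) c])
  exact (convex_ball (0 : ℂ) r).norm_image_sub_le_of_norm_deriv_le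
    (fun w hw => hf.differentiableAt (isOpen_ball.mem_nhds (ball_subset_ball hr.le hw)))
    hderiv hz' hz

/-- `comp p` is the paper's `G_{ω₀…ω_p} = G_{ω₀} ∘ ⋯ ∘ G_{ω_p}`. -/
def IsPrefixComposition {ι α : Type*} (G : ι → α → α) (ω : ℕ → ι) (comp : ℕ → α → α) : Prop :=
  comp 0 = G (ω 0) ∧ ∀ p, comp (p + 1) = comp p ∘ G (ω (p + 1))

namespace IsPrefixComposition

section Composition

variable {ι α : Type*} {G : ι → α → α} {ω ω' : ℕ → ι} {comp comp' : ℕ → α → α}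

theorem image_succ (hc : IsPrefixComposition G ω comp) (p : ℕ) (S : Set α) :
    comp (p + 1) '' S = comp p '' (G (ω (p + 1)) '' S) := by
  rw [hc.2, image_comp]

theorem mapsTo (hc : IsPrefixComposition G ω comp) {S : Set α} (hG : ∀ j, MapsTo (G j) S S) :
    ∀ p, MapsTo (comp p) S S
  | 0 => hc.1 ▸ hG _
  | p + 1 => hc.2 p ▸ (hc.mapsTo hG p).comp (hG _)

theorem eq_of_forall_le (hc : IsPrefixComposition G ω comp) (hc' : IsPrefixComposition G ω' comp')
    {p : ℕ} (h : ∀ i ≤ p, ω i = ω' i) : comp p = comp' p := by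
  induction p with
  | zero => rw [hc.1, hc'.1, h 0 le_rfl]
  | succ p ih => rw [hc.2, hc'.2, ih fun i hi => h i (hi.trans p.le_succ), h (p + 1) le_rfl]

theorem differentiableAt {𝕜 : Type*} [NontriviallyNormedField 𝕜] [NormedAddCommGroup α]
    [NormedSpace 𝕜 α] (hc : IsPrefixComposition G ω comp) {S : Set α}
    (hG : ∀ j, MapsTo (G j) S S) (hdiff : ∀ j, ∀ x ∈ S, DifferentiableAt 𝕜 (G j) x) :
    ∀ p, ∀ x ∈ S, DifferentiableAt 𝕜 (comp p) x
  | 0, x, hx => hc.1 ▸ hdiff _ x hx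
  | p + 1, x, hx => hc.2 p ▸ (hc.differentiableAt hG hdiff p _ (hG _ hx)).comp x (hdiff _ x hx)

end Composition

section Fibred

variable {ι β E : Type*} {G : ι → β × E → β × E} {ω ω' : ℕ → ι}
  {comp comp' : ℕ → β × E → β × E} {s : Set β} {t : Set E}

theorem fst_apply (hc : IsPrefixComposition G ω comp) (hfst : ∀ j b z, (G j (b, z)).1 = b) :
    ∀ p x, (comp p x).1 = x.1
  | 0, x => hc.1 ▸ hfst _ x.1 x.2
  | p + 1, x => by rw [hc.2]; exact (hc.fst_apply hfst p _).trans (hfst _ x.1 x.2)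

theorem apply_succ_mk (hc : IsPrefixComposition G ω comp) (hfst : ∀ j b z, (G j (b, z)).1 = b)
    (p : ℕ) (b : β) (z : E) : comp (p + 1) (b, z) = comp p (b, (G (ω (p + 1)) (b, z)).2) := by
  rw [hc.2]
  exact congrArg (comp p) (Prod.ext (hfst _ _ _) rfl)

variable [NormedAddCommGroup E]

theorem norm_snd_sub_le (hc : IsPrefixComposition G ω comp) (hfst : ∀ j b z, (G j (b, z)).1 = b)
    (hG : ∀ j, MapsTo (G j) (s ×ˢ t) (s ×ˢ t)) {κ : ℝ} (hκ : 0 ≤ κ)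
    (hcontr : ∀ j, ∀ b ∈ s, ∀ z ∈ t, ∀ z' ∈ t,
      ‖(G j (b, z)).2 - (G j (b, z')).2‖ ≤ κ * ‖z - z'‖) :
    ∀ p, ∀ b ∈ s, ∀ z ∈ t, ∀ z' ∈ t,
      ‖(comp p (b, z)).2 - (comp p (b, z')).2‖ ≤ κ ^ (p + 1) * ‖z - z'‖
  | 0, b, hb, z, hz, z', hz' => by simpa [hc.1] using hcontr _ b hb z hz z' hz'
  | p + 1, b, hb, z, hz, z', hz' => by
    rw [hc.apply_succ_mk hfst, hc.apply_succ_mk hfst]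
    calc _ ≤ κ ^ (p + 1) * ‖(G (ω (p + 1)) (b, z)).2 - (G (ω (p + 1)) (b, z')).2‖ :=
          hc.norm_snd_sub_le hfst hG hκ hcontr p b hb _ (hG _ ⟨hb, hz⟩).2 _ (hG _ ⟨hb, hz'⟩).2
      _ ≤ κ ^ (p + 1) * (κ * ‖z - z'‖) := by gcongr; exact hcontr _ b hb z hz z' hz'
      _ = κ ^ (p + 1 + 1) * ‖z - z'‖ := by ring

theorem le_norm_snd_sub (hc : IsPrefixComposition G ω comp) (hfst : ∀ j b z, (G j (b, z)).1 = b)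
    (hG : ∀ j, MapsTo (G j) (s ×ˢ t) (s ×ˢ t)) {μ : ℝ} (hμ : 0 ≤ μ)
    (hexp : ∀ j, ∀ b ∈ s, ∀ z ∈ t, ∀ z' ∈ t,
      μ * ‖z - z'‖ ≤ ‖(G j (b, z)).2 - (G j (b, z')).2‖) :
    ∀ p, ∀ b ∈ s, ∀ z ∈ t, ∀ z' ∈ t,
      μ ^ (p + 1) * ‖z - z'‖ ≤ ‖(comp p (b, z)).2 - (comp p (b, z')).2‖
  | 0, b, hb, z, hz, z', hz' => by simpa [hc.1] using hexp _ b hb z hz z' hz'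
  | p + 1, b, hb, z, hz, z', hz' => by
    rw [hc.apply_succ_mk hfst, hc.apply_succ_mk hfst]
    calc μ ^ (p + 1 + 1) * ‖z - z'‖ = μ ^ (p + 1) * (μ * ‖z - z'‖) := by ring
      _ ≤ μ ^ (p + 1) * ‖(G (ω (p + 1)) (b, z)).2 - (G (ω (p + 1)) (b, z')).2‖ := by
          gcongr; exact hexp _ b hb z hz z' hz'
      _ ≤ _ := hc.le_norm_snd_sub hfst hG hμ hexp p b hb _ (hG _ ⟨hb, hz⟩).2 _ (hG _ ⟨hb, hz'⟩).2

theorem norm_snd_sub_le_of_forall_lt (hc : IsPrefixComposition G ω comp)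
    (hc' : IsPrefixComposition G ω' comp') (hfst : ∀ j b z, (G j (b, z)).1 = b)
    (hG : ∀ j, MapsTo (G j) (s ×ˢ t) (s ×ˢ t)) {κ δ : ℝ} (hκ : 0 ≤ κ)
    (hcontr : ∀ j, ∀ b ∈ s, ∀ z ∈ t, ∀ z' ∈ t,
      ‖(G j (b, z)).2 - (G j (b, z')).2‖ ≤ κ * ‖z - z'‖)
    (ht : ∀ z ∈ t, ∀ z' ∈ t, ‖z - z'‖ ≤ δ) {p : ℕ} (hagree : ∀ i < p, ω i = ω' i)
    {x y : β × E} (hx : x ∈ comp p '' (s ×ˢ t)) (hy : y ∈ comp' p '' (s ×ˢ t))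
    (hxy : x.1 = y.1) : ‖x.2 - y.2‖ ≤ κ ^ p * δ := by
  cases p with
  | zero =>
    obtain ⟨-, hxt⟩ := (hc.mapsTo hG 0).image_subset hx
    obtain ⟨-, hyt⟩ := (hc'.mapsTo hG 0).image_subset hy
    simpa using ht _ hxt _ hyt
  | succ q =>
    rw [hc.image_succ] at hx
    rw [hc'.image_succ, ← hc.eq_of_forall_le hc' fun i hi => hagree i (Nat.lt_succ_of_le hi)] at hy
    obtain ⟨⟨b, z⟩, ⟨hb, hz⟩, rfl⟩ := image_mono (hG _).image_subset hx
    obtain ⟨⟨b', z'⟩, ⟨-, hz'⟩, rfl⟩ := image_mono (hG _).image_subset hy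
    obtain rfl : b = b' := by simpa only [hc.fst_apply hfst] using hxy
    calc _ ≤ κ ^ (q + 1) * ‖z - z'‖ := hc.norm_snd_sub_le hfst hG hκ hcontr q b hb z hz z' hz'
      _ ≤ κ ^ (q + 1) * δ := by gcongr; exact ht z hz z' hz'

theorem eq_of_forall_mem_image (hc : IsPrefixComposition G ω comp)
    (hc' : IsPrefixComposition G ω comp') (hfst : ∀ j b z, (G j (b, z)).1 = b)
    (hG : ∀ j, MapsTo (G j) (s ×ˢ t) (s ×ˢ t)) {κ δ : ℝ} (hκ0 : 0 ≤ κ) (hκ1 : κ < 1)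
    (hcontr : ∀ j, ∀ b ∈ s, ∀ z ∈ t, ∀ z' ∈ t,
      ‖(G j (b, z)).2 - (G j (b, z')).2‖ ≤ κ * ‖z - z'‖)
    (ht : ∀ z ∈ t, ∀ z' ∈ t, ‖z - z'‖ ≤ δ) {b : β} {z z' : E}
    (hz : ∀ p, (b, z) ∈ comp p '' (s ×ˢ t)) (hz' : ∀ p, (b, z') ∈ comp' p '' (s ×ˢ t)) :
    z = z' := by
  have hlim : Filter.Tendsto (fun p : ℕ => κ ^ p * δ) Filter.atTop (nhds 0) := by
    simpa using (tendsto_pow_atTop_nhds_zero_of_lt_one hκ0 hκ1).mul_const δ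
  have hle : ‖z - z'‖ ≤ 0 := ge_of_tendsto' hlim fun p =>
    hc.norm_snd_sub_le_of_forall_lt (x := (b, z)) (y := (b, z')) hc' hfst hG hκ0 hcontr ht
      (fun _ _ => rfl) (hz p) (hz' p) rfl
  exact sub_eq_zero.1 (norm_le_zero_iff.1 hle)

theorem le_norm_sub_of_ne [SeminormedAddCommGroup β] (hc : IsPrefixComposition G ω comp)
    (hc' : IsPrefixComposition G ω' comp') (hfst : ∀ j b z, (G j (b, z)).1 = b)
    (hG : ∀ j, MapsTo (G j) (s ×ˢ t) (s ×ˢ t)) {μ L d : ℝ} (hμ0 : 0 ≤ μ) (hμ1 : μ ≤ 1)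
    (hexp : ∀ j, ∀ b ∈ s, ∀ z ∈ t, ∀ z' ∈ t,
      μ * ‖z - z'‖ ≤ ‖(G j (b, z)).2 - (G j (b, z')).2‖)
    {s' : Set β} (hL : 0 ≤ L) (hlip : ∀ q, ∀ b ∈ s', ∀ b' ∈ s', ∀ z ∈ t,
      ‖(comp q (b, z)).2 - (comp q (b', z)).2‖ ≤ L * ‖b - b'‖)
    {p : ℕ} (hsep : ∀ x ∈ G (ω p) '' (s ×ˢ t), ∀ y ∈ G (ω' p) '' (s ×ˢ t), d ≤ dist x y)
    (hagree : ∀ i < p, ω i = ω' i) {x y : β × E} (hx : x ∈ comp p '' (s ×ˢ t))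
    (hy : y ∈ comp' p '' (s ×ˢ t)) (hxs : x.1 ∈ s') (hys : y.1 ∈ s') :
    μ ^ p * (d / (L + 1)) ≤ ‖x - y‖ := by
  cases p with
  | zero =>
    rw [hc.1] at hx
    rw [hc'.1] at hy
    simpa using le_norm_map_sub_map (Φ := id) (fun _ => rfl) zero_le_one le_rfl hL
      (by simp) (by simp [mul_nonneg hL]) ((hsep x hx y hy).trans_eq (dist_eq_norm x y))
  | succ q =>
    rw [hc.image_succ] at hx
    rw [hc'.image_succ, ← hc.eq_of_forall_le hc' fun i hi => hagree i (Nat.lt_succ_of_le hi)] at hy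
    obtain ⟨x, hxG, rfl⟩ := hx
    obtain ⟨y, hyG, rfl⟩ := hy
    obtain ⟨hxs', hxt⟩ := (hG _).image_subset hxG
    obtain ⟨-, hyt⟩ := (hG _).image_subset hyG
    rw [hc.fst_apply hfst] at hxs hys
    refine le_norm_map_sub_map (hc.fst_apply hfst q) (pow_nonneg hμ0 _) (pow_le_one₀ hμ0 hμ1) hL
      ?_ (hlip q _ hxs _ hys _ hyt) ((hsep x hxG y hyG).trans_eq (dist_eq_norm x y))
    exact hc.le_norm_snd_sub hfst hG hμ0 hexp q _ hxs' _ hxt _ hyt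

end Fibred

end IsPrefixComposition

theorem IsPrefixComposition.norm_snd_sub_le_of_mem_ball {ι E : Type*} [NormedAddCommGroup E]
    [NormedSpace ℂ E] {G : ι → ℂ × E → ℂ × E} {ω : ℕ → ι} {comp : ℕ → ℂ × E → ℂ × E}
    (hc : IsPrefixComposition G ω comp) {s : Set ℂ} {t : Set E} {c : E} {R r : ℝ}
    (hG : ∀ j, MapsTo (G j) (s ×ˢ t) (s ×ˢ t))
    (hdiff : ∀ j, ∀ x ∈ s ×ˢ t, DifferentiableAt ℂ (G j) x) (hs : ball 0 1 ⊆ s)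
    (ht : t ⊆ closedBall c R) (hr : r < 1) (q : ℕ) {b b' : ℂ} (hb : b ∈ ball (0 : ℂ) r)
    (hb' : b' ∈ ball (0 : ℂ) r) {z : E} (hz : z ∈ t) :
    ‖(comp q (b, z)).2 - (comp q (b', z)).2‖ ≤ 2 * R / (1 - r) * ‖b - b'‖ := by
  refine Complex.norm_sub_le_of_mapsTo_closedBall (f := fun b => (comp q (b, z)).2)
    (fun b hb => ?_) (fun b hb => ht ((hc.mapsTo hG q ⟨hs hb, hz⟩).2)) hr hb hb'
  have hcomp := hc.differentiableAt hG hdiff q (b, z) ⟨hs hb, hz⟩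
  exact (hcomp.comp b (differentiableAt_id.prodMk (differentiableAt_const z))).snd
    |>.differentiableWithinAt

/-- the holonomy map H_{lam₀} on the family of limit graphs is
(a/A)-Hölder on 𝒢 ∩ (D_r × B). -/
theorem stmt_8 {k m : ℕ}
    (a A : ℝ) (ha : 0 < a) (haA : a ≤ A)
    (c : EuclideanSpace ℂ (Fin k)) (R : ℝ) (hR : 0 < R)
    (G : Fin m → ℂ × EuclideanSpace ℂ (Fin k) → ℂ × EuclideanSpace ℂ (Fin k))
    (hol : ∀ j, ∃ U : Set (ℂ × EuclideanSpace ℂ (Fin k)), IsOpen U ∧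
      closure (ball (0:ℂ) 1) ×ˢ closure (ball c R) ⊆ U ∧ DifferentiableOn ℂ (G j) U)
    (hfiber : ∀ j (lam : ℂ) z, (G j (lam, z)).1 = lam)
    (hmaps : ∀ j, G j '' (closure (ball (0:ℂ) 1) ×ˢ closure (ball c R)) ⊆
      closure (ball (0:ℂ) 1) ×ˢ ball c R)
    (hcontr : ∀ j, ∀ lam ∈ closure (ball (0:ℂ) 1), ∀ z ∈ closure (ball c R),
      ∀ z' ∈ closure (ball c R),
      exp (-A) * ‖z - z'‖ ≤ ‖(G j (lam, z)).2 - (G j (lam, z')).2‖ ∧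
      ‖(G j (lam, z)).2 - (G j (lam, z')).2‖ ≤ exp (-a) * ‖z - z'‖)
    (d : ℝ) (hd : 0 < d)
    (hsep : ∀ j j', j ≠ j' →
      ∀ x ∈ G j '' (closure (ball (0:ℂ) 1) ×ˢ closure (ball c R)),
      ∀ y ∈ G j' '' (closure (ball (0:ℂ) 1) ×ˢ closure (ball c R)), d ≤ dist x y) :
    ∀ lam₀ ∈ ball (0:ℂ) 1, ∀ r : ℝ, 0 < r → r < 1 → ∃ C' > (0:ℝ),
      ∀ (ω ω' : ℕ → Fin m)
        (comp comp' : ℕ → ℂ × EuclideanSpace ℂ (Fin k) → ℂ × EuclideanSpace ℂ (Fin k)),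
        comp 0 = G (ω 0) → (∀ p, comp (p + 1) = comp p ∘ G (ω (p + 1))) →
        comp' 0 = G (ω' 0) → (∀ p, comp' (p + 1) = comp' p ∘ G (ω' (p + 1))) →
        ∀ lam ∈ ball (0:ℂ) r, ∀ lam' ∈ ball (0:ℂ) r,
        ∀ w w' w₀ w₀' : EuclideanSpace ℂ (Fin k),
        (∀ p : ℕ, (lam, w) ∈ comp p '' (closure (ball (0:ℂ) 1) ×ˢ closure (ball c R))) →
        (∀ p : ℕ, (lam₀, w₀) ∈ comp p '' (closure (ball (0:ℂ) 1) ×ˢ closure (ball c R))) →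
        (∀ p : ℕ, (lam', w') ∈ comp' p '' (closure (ball (0:ℂ) 1) ×ˢ closure (ball c R))) →
        (∀ p : ℕ, (lam₀, w₀') ∈ comp' p '' (closure (ball (0:ℂ) 1) ×ˢ closure (ball c R))) →
        ‖w₀ - w₀'‖ ≤ C' * ‖((lam, w) : ℂ × EuclideanSpace ℂ (Fin k)) - (lam', w')‖ ^ (a / A) := by
  intro lam₀ _ r _ hr1
  have hA : 0 < A := ha.trans_le haA
  set L := 2 * R / (1 - r)
  have hL : 0 ≤ L := div_nonneg (by linarith) (by linarith)
  have hC₁ : 0 < d / (L + 1) := div_pos hd (by linarith)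
  refine ⟨2 * R / (d / (L + 1)) ^ (a / A), by positivity, ?_⟩
  intro ω ω' comp comp' h0 hrec h0' hrec' lam hlam lam' hlam' w w' w₀ w₀' h1 h2 h3 h4
  have hc : IsPrefixComposition G ω comp := ⟨h0, hrec⟩
  have hc' : IsPrefixComposition G ω' comp' := ⟨h0', hrec'⟩
  have hG (j : Fin m) : MapsTo (G j) (closure (ball 0 1) ×ˢ closure (ball c R))
      (closure (ball 0 1) ×ˢ closure (ball c R)) :=
    (mapsTo_iff_image_subset.2 (hmaps j)).mono_right (prod_mono subset_rfl subset_closure)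
  have hdiff (j : Fin m) : ∀ x ∈ closure (ball 0 1) ×ˢ closure (ball c R),
      DifferentiableAt ℂ (G j) x := by
    obtain ⟨U, hU, hKU, hGU⟩ := hol j
    exact fun x hx => hGU.differentiableAt (hU.mem_nhds (hKU hx))
  have hdiamB : ∀ z ∈ closure (ball c R), ∀ z' ∈ closure (ball c R), ‖z - z'‖ ≤ 2 * R :=
    fun z hz z' hz' => norm_sub_le_of_mem_closure_ball hz hz'
  have hcontr_le := fun j b hb z hz z' hz' => (hcontr j b hb z hz z' hz').2
  by_cases hω : ω = ω'
  · subst hω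
    rw [hc.eq_of_forall_mem_image hc' hfiber hG (exp_pos _).le
      (exp_lt_one_iff.2 (neg_neg_of_pos ha)) hcontr_le hdiamB h2 h4, sub_self, norm_zero]
    positivity
  obtain ⟨p, hne, hagree⟩ : ∃ p, ω p ≠ ω' p ∧ ∀ i < p, ω i = ω' i := by
    have hex : ∃ p, ω p ≠ ω' p := Function.ne_iff.1 hω
    exact ⟨Nat.find hex, Nat.find_spec hex, fun i hi => not_not.1 (Nat.find_min hex hi)⟩
  have hupper := hc.norm_snd_sub_le_of_forall_lt (x := (lam₀, w₀)) (y := (lam₀, w₀')) hc' hfiber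
    hG (exp_pos _).le hcontr_le hdiamB hagree (h2 p) (h4 p) rfl
  have hlower := hc.le_norm_sub_of_ne hc' hfiber hG (exp_pos _).le
    (exp_le_one_iff.2 (by linarith)) (fun j b hb z hz z' hz' => (hcontr j b hb z hz z' hz').1) hL
    (fun q b hb b' hb' z hz => hc.norm_snd_sub_le_of_mem_ball hG hdiff subset_closure
      closure_ball_subset_closedBall hr1 q hb hb' hz)
    (hsep _ _ hne) hagree
    (h1 p) (h3 p) hlam hlam'
  calc ‖w₀ - w₀'‖ ≤ exp (-a) ^ p * (2 * R) := hupper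
    _ ≤ (‖((lam, w) : ℂ × EuclideanSpace ℂ (Fin k)) - (lam', w')‖ / (d / (L + 1))) ^ (a / A)
        * (2 * R) := by gcongr; exact exp_neg_pow_le_rpow ha.le hA hC₁ hlower
    _ = _ := by rw [div_rpow (norm_nonneg _) hC₁.le]; ring
end
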